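/- arXiv:0911.4151 — 6 statements merged into one kernel-verified Lean document; each statement's English description precedes it below -/
import Mathlib

section
/- Let g : ℝ^d → ℝ̄ be a convex function and let y₁ < y₂ < y₃ be real numbers with the sublevel set {x : g(x) ≤ y₁} nonempty. Then μ({g ≤ y₃}) ≤ ((y₃ − y₁)/(y₂ − y₁))^d · μ({g ≤ y₂}), where μ is Lebesgue measure on ℝ^d. -/
/-!
Fix `c` with `g c ≤ y₁` and put `t = (y₂ - y₁) / (y₃ - y₁) ∈ (0, 1]`. By convexity the homothety
with centre `c` and ratio `t` maps `{g ≤ y₃}` into `{g ≤ (1 - t) y₁ + t y₃} = {g ≤ y₂}`, and it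
multiplies Lebesgue measure by `t ^ d`.
-/

open MeasureTheory

/-- Convexity for extended-real-valued functions (convex functions `ℝ^d → ℝ ∪ {±∞}`). -/
def ERealConvex {E : Type*} [AddCommGroup E] [Module ℝ E] (g : E → EReal) : Prop :=
  ∀ x y : E, ∀ a b : ℝ, 0 ≤ a → 0 ≤ b → a + b = 1 →
    g (a • x + b • y) ≤ (a : EReal) * g x + (b : EReal) * g y

open Module

namespace ERealConvex

section AddCommGroup

variable {E : Type*} [AddCommGroup E] [Module ℝ E] {g : E → EReal}

theorem apply_lineMap_le (hg : ERealConvex g) {x y : E} {a b t : ℝ} (hx : g x ≤ a)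
    (hy : g y ≤ b) (ht₀ : 0 ≤ t) (ht₁ : t ≤ 1) :
    g (AffineMap.lineMap x y t) ≤ ((1 - t) * a + t * b : ℝ) := by
  have ht₁' : (0 : EReal) ≤ ((1 - t : ℝ) : EReal) := EReal.coe_nonneg.2 (by linarith)
  have ht₀' : (0 : EReal) ≤ (t : EReal) := EReal.coe_nonneg.2 ht₀
  calc g (AffineMap.lineMap x y t)
      ≤ ((1 - t : ℝ) : EReal) * g x + (t : EReal) * g y := by
        rw [AffineMap.lineMap_apply_module]
        exact hg x y (1 - t) t (by linarith) ht₀ (by ring)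
    _ ≤ ((1 - t : ℝ) : EReal) * a + (t : EReal) * b := by gcongr
    _ = ((1 - t) * a + t * b : ℝ) := by norm_cast

theorem homothety_image_sublevel_subset (hg : ERealConvex g) {c : E} {a b t : ℝ}
    (hc : g c ≤ a) (ht₀ : 0 ≤ t) (ht₁ : t ≤ 1) :
    AffineMap.homothety c t '' {x | g x ≤ b} ⊆ {x | g x ≤ ((1 - t) * a + t * b : ℝ)} := by
  rintro _ ⟨x, hx, rfl⟩
  exact hg.apply_lineMap_le hc hx ht₀ ht₁

end AddCommGroup

theorem addHaar_sublevel_le {E : Type*} [NormedAddCommGroup E] [NormedSpace ℝ E]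
    [MeasurableSpace E] [BorelSpace E] [FiniteDimensional ℝ E] (μ : Measure E)
    [μ.IsAddHaarMeasure] {g : E → EReal} (hg : ERealConvex g) {y₁ y₂ y₃ : ℝ}
    (h12 : y₁ < y₂) (h23 : y₂ ≤ y₃) (hne : {x | g x ≤ (y₁ : EReal)}.Nonempty) :
    μ {x | g x ≤ (y₃ : EReal)} ≤
      ENNReal.ofReal (((y₃ - y₁) / (y₂ - y₁)) ^ finrank ℝ E) * μ {x | g x ≤ (y₂ : EReal)} := by
  obtain ⟨c, hc⟩ := hne
  have h21 : 0 < y₂ - y₁ := by linarith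
  have h31 : 0 < y₃ - y₁ := by linarith
  set t := (y₂ - y₁) / (y₃ - y₁)
  have ht₀ : 0 ≤ t := by positivity
  have ht₁ : t ≤ 1 := (div_le_one h31).2 (by linarith)
  have hy₂ : (1 - t) * y₁ + t * y₃ = y₂ := by
    simp only [t]
    field_simp
    ring
  have hshrink : ENNReal.ofReal (t ^ finrank ℝ E) * μ {x | g x ≤ (y₃ : EReal)} ≤
      μ {x | g x ≤ (y₂ : EReal)} := by
    calc ENNReal.ofReal (t ^ finrank ℝ E) * μ {x | g x ≤ (y₃ : EReal)}
        = μ (AffineMap.homothety c t '' {x | g x ≤ (y₃ : EReal)}) := by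
          rw [Measure.addHaar_image_homothety, abs_of_nonneg (by positivity)]
      _ ≤ μ {x | g x ≤ (y₂ : EReal)} :=
          measure_mono (hy₂ ▸ hg.homothety_image_sublevel_subset hc ht₀ ht₁)
  have hinv : (y₃ - y₁) / (y₂ - y₁) * t = 1 := by
    simp only [t]
    field_simp
  calc μ {x | g x ≤ (y₃ : EReal)}
      = ENNReal.ofReal (((y₃ - y₁) / (y₂ - y₁)) ^ finrank ℝ E) *
          (ENNReal.ofReal (t ^ finrank ℝ E) * μ {x | g x ≤ (y₃ : EReal)}) := by
        rw [← mul_assoc, ← ENNReal.ofReal_mul (by positivity), ← mul_pow, hinv, one_pow,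
          ENNReal.ofReal_one, one_mul]
    _ ≤ _ := by gcongr

end ERealConvex

theorem sublevel_measure_growth (d : ℕ) (g : (Fin d → ℝ) → EReal)
    (hg : ERealConvex g)
    (y₁ y₂ y₃ : ℝ) (h12 : y₁ < y₂) (h23 : y₂ < y₃)
    (hne : {x | g x ≤ (y₁ : EReal)}.Nonempty) :
    volume {x | g x ≤ (y₃ : EReal)} ≤
      ENNReal.ofReal (((y₃ - y₁) / (y₂ - y₁)) ^ d) * volume {x | g x ≤ (y₂ : EReal)} := by
  simpa only [finrank_fin_fun] using hg.addHaar_sublevel_le volume h12 h23.le hne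
end

section
/- If g : ℝ^d → ℝ̄ is a convex function, then the function y ↦ μ({x : g(x) ≤ y}) is continuous on the open interval (inf g, sup g). -/
/-!
Choose `x₀` and `c < y` with `g x₀ ≤ c`. For `c < s ≤ t`, convexity shows that the homothety
centred at `x₀` with ratio `(s - c) / (t - c)` maps `{g ≤ t}` into `{g ≤ s}`, so
`((s - c) / (t - c)) ^ d * μ {g ≤ t} ≤ μ {g ≤ s}`. As `s` and `t` approach `y` the ratio tends
to `1`, which squeezes the monotone function `t ↦ μ {g ≤ t}` at `y` from both sides.
-/

open MeasureTheory Filter Topology Module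
open scoped ENNReal

theorem ERealConvex.homothety_image_sublevel_subset_s4 {E : Type*} [AddCommGroup E] [Module ℝ E]
    {g : E → EReal} (hg : ERealConvex g) {x₀ : E} {c s t : ℝ} (hx₀ : g x₀ ≤ c) (hcs : c < s)
    (hst : s ≤ t) :
    AffineMap.homothety x₀ ((s - c) / (t - c)) '' {x | g x ≤ t} ⊆ {x | g x ≤ s} := by
  have htc : 0 < t - c := by linarith
  set r := (s - c) / (t - c)
  have hr : 0 ≤ r := div_nonneg (by linarith) htc.le
  have hr' : 0 ≤ 1 - r := by rw [sub_nonneg, div_le_one htc]; linarith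
  have hs : (1 - r) * c + r * t = s := by simp only [r]; field_simp; ring
  rintro _ ⟨x, hx, rfl⟩
  have hpoint : AffineMap.homothety x₀ r x = (1 - r) • x₀ + r • x := by
    rw [AffineMap.homothety_apply, vsub_eq_sub, vadd_eq_add]; module
  calc g (AffineMap.homothety x₀ r x)
      ≤ ((1 - r : ℝ) : EReal) * g x₀ + (r : EReal) * g x := by
        rw [hpoint]; exact hg _ _ _ _ hr' hr (by ring)
    _ ≤ ((1 - r : ℝ) : EReal) * c + (r : EReal) * t := by
        gcongr; exact hx
    _ = s := by rw [← hs]; norm_cast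

theorem ERealConvex.ofReal_pow_mul_measure_sublevel_le {E : Type*} [NormedAddCommGroup E]
    [NormedSpace ℝ E] [MeasurableSpace E] [BorelSpace E] [FiniteDimensional ℝ E]
    (μ : Measure E) [μ.IsAddHaarMeasure] {g : E → EReal} (hg : ERealConvex g) {x₀ : E}
    {c s t : ℝ} (hx₀ : g x₀ ≤ c) (hcs : c < s) (hst : s ≤ t) :
    ENNReal.ofReal (((s - c) / (t - c)) ^ finrank ℝ E) * μ {x | g x ≤ t} ≤ μ {x | g x ≤ s} := by
  have hr : 0 ≤ (s - c) / (t - c) := div_nonneg (by linarith) (by linarith)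
  calc _ = μ (AffineMap.homothety x₀ ((s - c) / (t - c)) '' {x | g x ≤ t}) := by
        rw [Measure.addHaar_image_homothety, abs_of_nonneg (pow_nonneg hr _)]
    _ ≤ μ {x | g x ≤ s} := measure_mono (hg.homothety_image_sublevel_subset_s4 hx₀ hcs hst)

theorem continuousAt_of_monotone_of_ofReal_pow_mul_le {F : ℝ → ℝ≥0∞} {c y : ℝ} (n : ℕ)
    (hF : Monotone F) (hcy : c < y)
    (hratio : ∀ s t, c < s → s ≤ t → ENNReal.ofReal (((s - c) / (t - c)) ^ n) * F t ≤ F s) :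
    ContinuousAt F y := by
  set G : ℝ → ℝ≥0∞ := fun u => ENNReal.ofReal (((u - c) / (y - c)) ^ n)
  have hGy : G y = 1 := by simp [G, div_self (sub_pos.2 hcy).ne']
  have hG : Tendsto (fun t => G t * F y) (𝓝 y) (𝓝 (F y)) := by
    have : Tendsto G (𝓝 y) (𝓝 1) :=
      hGy ▸ (ENNReal.continuous_ofReal.comp (by fun_prop)).tendsto y
    simpa using ENNReal.Tendsto.mul_const this (Or.inl one_ne_zero)
  have hc : ∀ᶠ t in 𝓝 y, c < t := Ioi_mem_nhds hcy
  have hupper : ∀ t, y ≤ t → F t ≤ G t * F y := by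
    intro t hyt
    have hρ : 0 < ((y - c) / (t - c)) ^ n := pow_pos (div_pos (by linarith) (by linarith)) n
    have hGt : (ENNReal.ofReal (((y - c) / (t - c)) ^ n))⁻¹ = G t := by
      rw [← ENNReal.ofReal_inv_of_pos hρ, ← inv_pow, inv_div]
    rw [← hGt, ← ENNReal.mul_le_iff_le_inv (by simpa using hρ) ENNReal.ofReal_ne_top]
    exact hratio y t hcy hyt
  refine continuousAt_iff_continuous_left_right.2 ⟨?_, ?_⟩
  · refine tendsto_of_tendsto_of_tendsto_of_le_of_le' (hG.mono_left nhdsWithin_le_nhds)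
      tendsto_const_nhds ?_ ?_
    · filter_upwards [nhdsWithin_le_nhds hc, self_mem_nhdsWithin] with t hct hty
      exact hratio t y hct hty
    · filter_upwards [self_mem_nhdsWithin] with t hty using hF hty
  · refine tendsto_of_tendsto_of_tendsto_of_le_of_le' tendsto_const_nhds
      (hG.mono_left nhdsWithin_le_nhds) ?_ ?_
    · filter_upwards [self_mem_nhdsWithin] with t hyt using hF hyt
    · filter_upwards [self_mem_nhdsWithin] with t hyt using hupper t hyt

theorem sublevel_measure_continuous_general (d : ℕ) (g : (Fin d → ℝ) → EReal)
    (hg : ERealConvex g) (y : ℝ) (h1 : (⨅ x, g x) < (y : EReal)) :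
    ContinuousAt (fun t : ℝ => volume {x | g x ≤ (t : EReal)}) y := by
  obtain ⟨x₀, hx₀⟩ := iInf_lt_iff.mp h1
  obtain ⟨c, hx₀c, hcy⟩ := EReal.exists_between_coe_real hx₀
  have hmono : Monotone fun t : ℝ => volume {x | g x ≤ (t : EReal)} := fun s t hst =>
    measure_mono fun x hx => hx.trans (EReal.coe_le_coe_iff.2 hst)
  refine continuousAt_of_monotone_of_ofReal_pow_mul_le d hmono (EReal.coe_lt_coe_iff.1 hcy)
    fun s t hcs hst => ?_
  simpa only [finrank_fin_fun] using hg.ofReal_pow_mul_measure_sublevel_le volume hx₀c.le hcs hst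

theorem sublevel_measure_continuous (d : ℕ) (g : (Fin d → ℝ) → EReal)
    (hg : ERealConvex g) (hbot : ∀ x, g x ≠ ⊥) (hproper : ∃ x, g x ≠ ⊤)
    (y : ℝ) (h1 : (⨅ x, g x) < (y : EReal)) (h2 : (y : EReal) < ⨆ x, g x) :
    ContinuousAt (fun t : ℝ => volume {x | g x ≤ (t : EReal)}) y :=
  sublevel_measure_continuous_general d g hg y h1
end

section
/- Let h be a nondecreasing function ℝ̄ → [0,∞] with h(−∞)=0 and h(+∞)=+∞, y₀ = inf{y : h(y)>0}, and let g be a closed proper convex function on the closed positive orthant of ℝ^d with ∫ h(g(x)) dx = C < ∞. Then for every x₀ in the open positive orthant with g(x₀) > y₀, one has h(g(x₀)) ≤ C·d!/(d^d · ∏_{k=1}^d (x₀)_k). -/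
/-!
Put `p = h (g x₀)`. As `h` is monotone, `p * vol R ≤ C` for every measurable `R` in the orthant on
which `g ≥ g x₀`, so it suffices to find such an `R` of volume at least `d ^ d ∏ (x₀)ₖ / d!`.
The strict sublevel set `K = {g < g x₀}` is convex and misses `x₀`. If `K` has empty interior it
is null, and we take the orthant minus `K`. Otherwise a linear functional `f`
separates `x₀` from `K`, and we take the part of the orthant where `f > f x₀`: either it contains
a half-infinite cylinder, or it is an open simplex `{x ≥ 0 | ∑ bₖ xₖ < ∑ bₖ (x₀)ₖ}` with `b > 0`,
of volume `(∑ bₖ (x₀)ₖ) ^ d / (d! ∏ bₖ) ≥ d ^ d ∏ (x₀)ₖ / d!` by AM-GM.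
-/

open MeasureTheory
open scoped ENNReal

open Set Filter Topology
open scoped Nat

theorem ERealConvex.quasiconvexOn {E : Type*} [AddCommGroup E] [Module ℝ E] {g : E → EReal}
    (hg : ERealConvex g) : QuasiconvexOn ℝ univ g := by
  refine quasiconvexOn_iff_le_max.2 ⟨convex_univ, fun x _ y _ a b ha hb hab => ?_⟩
  have ha' : (0 : EReal) ≤ a := EReal.coe_nonneg.2 ha
  have hb' : (0 : EReal) ≤ b := EReal.coe_nonneg.2 hb
  calc g (a • x + b • y) ≤ a * g x + b * g y := hg x y a b ha hb hab
    _ ≤ a * max (g x) (g y) + b * max (g x) (g y) := by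
      gcongr
      · exact le_max_left _ _
      · exact le_max_right _ _
    _ = max (g x) (g y) := by
      rw [← EReal.right_distrib_of_nonneg ha' hb', ← EReal.coe_add, hab, EReal.coe_one, one_mul]

theorem pow_card_mul_prod_le_sum_pow {ι : Type*} [Fintype ι] {z : ι → ℝ} (hz : ∀ i, 0 ≤ z i) :
    (Fintype.card ι : ℝ) ^ Fintype.card ι * ∏ i, z i ≤ (∑ i, z i) ^ Fintype.card ι := by
  rcases isEmpty_or_nonempty ι with hι | hι
  · simp
  have hn : (0 : ℝ) < Fintype.card ι := by exact_mod_cast Fintype.card_pos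
  have amgm := Real.geom_mean_le_arith_mean Finset.univ (fun _ => 1) z (fun _ _ => zero_le_one)
    (by simpa using hn) (fun i _ => hz i)
  simp only [Real.rpow_one, Finset.sum_const, Finset.card_univ, nsmul_eq_mul, mul_one,
    one_mul] at amgm
  have hprod : 0 ≤ ∏ i, z i := Finset.prod_nonneg fun i _ => hz i
  have := pow_le_pow_left₀ (by positivity) amgm (Fintype.card ι)
  rw [← Real.rpow_natCast, ← Real.rpow_mul hprod, inv_mul_cancel₀ hn.ne', Real.rpow_one,
    div_pow, le_div_iff₀ (by positivity)] at this
  linarith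

theorem volume_orthant_sum_lt (n : ℕ) {c : ℝ} (hc : 0 < c) :
    volume {x : Fin n → ℝ | x ∈ Ici 0 ∧ ∑ i, x i < c} = ENNReal.ofReal (c ^ n / n !) := by
  induction n generalizing c with
  | zero => simp [hc, volume_pi]
  | succ n ih =>
    set T : Set (ℝ × (Fin n → ℝ)) := {p | (0 ≤ p.1 ∧ p.2 ∈ Ici 0) ∧ p.1 + ∑ i, p.2 i < c}
    have hT : MeasurableSet T := by
      refine ((measurableSet_le measurable_const measurable_fst).inter ?_).inter
        (measurableSet_lt (f := fun p : ℝ × (Fin n → ℝ) => p.1 + ∑ i, p.2 i) (by fun_prop)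
          measurable_const)
      exact measurable_snd measurableSet_Ici
    have hpre : MeasurableEquiv.piFinSuccAbove (fun _ => ℝ) 0 ⁻¹' T =
        {x : Fin (n + 1) → ℝ | x ∈ Ici 0 ∧ ∑ i, x i < c} := by
      ext x
      simp [T, MeasurableEquiv.piFinSuccAbove, Fin.forall_fin_succ, Fin.sum_univ_succ,
        Pi.le_def, Fin.tail]
    have hslice (t : ℝ) : volume (Prod.mk t ⁻¹' T) =
        (Ico 0 c).indicator (fun t => ENNReal.ofReal ((c - t) ^ n / n !)) t := by
      by_cases ht : t ∈ Ico 0 c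
      · rw [indicator_of_mem ht, ← ih (sub_pos.2 ht.2)]
        congr 1
        ext y
        simp only [T, mem_preimage, mem_ofPred_eq, ht.1, true_and, lt_sub_iff_add_lt']
      · rw [indicator_of_notMem ht, ← measure_empty (μ := (volume : Measure (Fin n → ℝ)))]
        congr 1
        refine eq_empty_of_forall_notMem fun y ⟨⟨ht0, hy⟩, hsum⟩ => ht ⟨ht0, ?_⟩
        have : 0 ≤ ∑ i, y i := Finset.sum_nonneg fun i _ => hy i
        linarith
    have hintegral : ∫ t in Ico 0 c, (c - t) ^ n / n ! = c ^ (n + 1) / (n + 1)! := by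
      rw [integral_Ico_eq_integral_Ioo, ← integral_Ioc_eq_integral_Ioo,
        ← intervalIntegral.integral_of_le hc.le, intervalIntegral.integral_div,
        intervalIntegral.integral_comp_sub_left (fun t => t ^ n), integral_pow]
      simp [Nat.factorial_succ]
      field_simp
    rw [← hpre, (volume_preserving_piFinSuccAbove (fun _ => ℝ) 0).measure_preimage_equiv,
      Measure.volume_eq_prod, Measure.prod_apply hT, lintegral_congr hslice,
      lintegral_indicator measurableSet_Ico, ← hintegral, ofReal_integral_eq_lintegral_ofReal]
    · exact (Continuous.integrableOn_Icc (by fun_prop)).mono_set Ico_subset_Icc_self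
    · filter_upwards [ae_restrict_mem measurableSet_Ico] with t ht
      exact div_nonneg (pow_nonneg (sub_nonneg.2 ht.2.le) n) (by positivity)

theorem volume_orthant_weighted_sum_lt {n : ℕ} {b : Fin n → ℝ} (hb : ∀ i, 0 < b i) {c : ℝ}
    (hc : 0 < c) :
    volume {x : Fin n → ℝ | x ∈ Ici 0 ∧ ∑ i, b i * x i < c} =
      ENNReal.ofReal (c ^ n / (n ! * ∏ i, b i)) := by
  set L : (Fin n → ℝ) →ₗ[ℝ] Fin n → ℝ := Matrix.toLin' (Matrix.diagonal b)
  have hdet : LinearMap.det L = ∏ i, b i := by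
    rw [LinearMap.det_toLin', Matrix.det_diagonal]
  have hprod : 0 < ∏ i, b i := Finset.prod_pos fun i _ => hb i
  have hpre : {x : Fin n → ℝ | x ∈ Ici 0 ∧ ∑ i, b i * x i < c} =
      L ⁻¹' {y | y ∈ Ici 0 ∧ ∑ i, y i < c} := by
    ext x
    simp [L, Matrix.mulVec_diagonal, Pi.le_def, fun i => mul_nonneg_iff_of_pos_left (hb i)]
  rw [hpre, Measure.addHaar_preimage_linearMap _ (hdet ▸ hprod.ne'), volume_orthant_sum_lt n hc,
    hdet, abs_of_pos (inv_pos.2 hprod), ← ENNReal.ofReal_mul (by positivity)]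
  congr 1
  field_simp

theorem exists_mem_orthant_lt_apply {d : ℕ} {f : (Fin d → ℝ) →L[ℝ] ℝ} (hf : f ≠ 0)
    {x₀ : Fin d → ℝ} (hx₀ : ∀ i, 0 < x₀ i) : ∃ y ∈ Ici 0, f x₀ < f y := by
  obtain ⟨v, hv⟩ : ∃ v, 0 < f v := by
    obtain ⟨w, hw⟩ := DFunLike.ne_iff.1 hf
    rcases (show f w ≠ 0 from hw).lt_or_gt with hw | hw
    · exact ⟨-w, by simpa using hw⟩
    · exact ⟨w, hw⟩
  have hopen : IsOpen {x : Fin d → ℝ | ∀ i, 0 < x i} := by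
    simpa only [ofPred_forall] using
      isOpen_iInter_of_finite fun i => isOpen_lt continuous_const (continuous_apply i)
  have hlim : Tendsto (fun t : ℝ => x₀ + t • v) (𝓝[>] 0) (𝓝 x₀) := by
    refine Tendsto.mono_left ?_ nhdsWithin_le_nhds
    have hcont : Continuous fun t : ℝ => x₀ + t • v := by fun_prop
    simpa using hcont.tendsto 0
  obtain ⟨t, ht, htpos⟩ := ((hlim.eventually (hopen.mem_nhds hx₀)).and self_mem_nhdsWithin).exists
  refine ⟨x₀ + t • v, fun i => (ht i).le, ?_⟩
  simpa using mul_pos (mem_Ioi.1 htpos) hv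

theorem volume_orthant_halfspace_eq_top {d : ℕ} (f : (Fin d → ℝ) →L[ℝ] ℝ) {a : ℝ}
    {y : Fin d → ℝ} (hy : y ∈ Ici 0) (hay : a < f y) {i : Fin d}
    (hi : 0 ≤ f (Pi.single i 1)) : volume {x | x ∈ Ici 0 ∧ a < f x} = ⊤ := by
  obtain ⟨δ, hδ, hball⟩ := Metric.isOpen_iff.1 (isOpen_lt continuous_const f.continuous) y hay
  set P : Set (Fin d → ℝ) := univ.pi fun j => if j = i then Ici (y i) else Ico (y j) (y j + δ)
  have hPsub : P ⊆ {x | x ∈ Ici 0 ∧ a < f x} := by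
    intro x hx
    have hxj (j : Fin d) (hj : j ≠ i) : y j ≤ x j ∧ x j < y j + δ := by
      simpa [hj] using hx j (mem_univ j)
    have hxi : y i ≤ x i := by simpa using hx i (mem_univ i)
    set x' := Function.update x i (y i)
    have hx' : x' ∈ Metric.ball y δ := by
      rw [ball_pi _ hδ]
      intro j _
      by_cases hj : j = i
      · subst hj; simp [x', hδ]
      · simp only [x', Function.update_of_ne hj, Metric.mem_ball, Real.dist_eq, abs_lt]
        constructor <;> linarith [hxj j hj]
    have hx_eq : x = x' + (x i - y i) • Pi.single i 1 := by
      ext j; by_cases hj : j = i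
      · subst hj; simp [x']
      · simp [x', hj]
    refine ⟨fun j => ?_, ?_⟩
    · by_cases hj : j = i
      · subst hj; exact (hy j).trans hxi
      · exact (hy j).trans (hxj j hj).1
    · have hfx' : a < f x' := hball hx'
      have hshift : 0 ≤ (x i - y i) * f (Pi.single i 1) := mul_nonneg (sub_nonneg.2 hxi) hi
      rw [hx_eq, map_add, map_smul, smul_eq_mul]
      linarith
  refine measure_mono_top hPsub ?_
  rw [volume_pi_pi, ← Finset.mul_prod_erase _ _ (Finset.mem_univ i), if_pos rfl, Real.volume_Ici,
    ENNReal.top_mul]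
  refine Finset.prod_ne_zero_iff.2 fun j hj => ?_
  simp [if_neg (Finset.ne_of_mem_erase hj), hδ]

theorem ofReal_le_volume_orthant {d : ℕ} (x₀ : Fin d → ℝ) :
    ENNReal.ofReal (d ^ d * (∏ i, x₀ i) / d !) ≤ volume (Ici (0 : Fin d → ℝ)) := by
  rw [← pi_univ_Ici, volume_pi_pi]
  cases d <;> simp

theorem le_volume_orthant_halfspace {d : ℕ} {f : (Fin d → ℝ) →L[ℝ] ℝ} (hf : f ≠ 0)
    {x₀ : Fin d → ℝ} (hx₀ : ∀ i, 0 < x₀ i) :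
    ENNReal.ofReal (d ^ d * (∏ i, x₀ i) / d !) ≤ volume {x | x ∈ Ici 0 ∧ f x₀ < f x} := by
  obtain ⟨y, hy, hfy⟩ := exists_mem_orthant_lt_apply hf hx₀
  by_cases hcyl : ∃ i, 0 ≤ f (Pi.single i 1)
  · obtain ⟨i, hi⟩ := hcyl
    rw [volume_orthant_halfspace_eq_top f hy hfy hi]
    exact le_top
  push Not at hcyl
  set b : Fin d → ℝ := fun i => -f (Pi.single i 1)
  have hb (i : Fin d) : 0 < b i := neg_pos.2 (hcyl i)
  have hfb (x : Fin d → ℝ) : f x = -∑ i, b i * x i := by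
    conv_lhs => rw [pi_eq_sum_univ' x]
    simp [b, mul_comm]
  set c := ∑ i, b i * x₀ i
  have hc : 0 < c := by
    have : 0 ≤ ∑ i, b i * y i := Finset.sum_nonneg fun i _ => mul_nonneg (hb i).le (hy i)
    rw [hfb, hfb] at hfy
    linarith
  have hset : {x | x ∈ Ici 0 ∧ f x₀ < f x} = {x | x ∈ Ici 0 ∧ ∑ i, b i * x i < c} := by
    ext x
    simp [hfb, c]
  rw [hset, volume_orthant_weighted_sum_lt hb hc]
  refine ENNReal.ofReal_le_ofReal ?_
  have amgm := pow_card_mul_prod_le_sum_pow fun i => (mul_pos (hb i) (hx₀ i)).le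
  rw [Fintype.card_fin, Finset.prod_mul_distrib] at amgm
  have hprod : 0 < ∏ i, b i := Finset.prod_pos fun i _ => hb i
  rw [mul_comm (d ! : ℝ), ← div_div, div_le_div_iff_of_pos_right (by positivity),
    le_div_iff₀ hprod]
  linarith

theorem exists_subset_orthant_forall_le_of_quasiconvexOn {d : ℕ} {β : Type*} [LinearOrder β]
    {g : (Fin d → ℝ) → β} (hg : QuasiconvexOn ℝ univ g) {x₀ : Fin d → ℝ} (hx₀ : ∀ i, 0 < x₀ i) :
    ∃ R ⊆ Ici 0, MeasurableSet R ∧ (∀ x ∈ R, g x₀ ≤ g x) ∧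
      ENNReal.ofReal (d ^ d * (∏ i, x₀ i) / d !) ≤ volume R := by
  set K := {x | g x < g x₀}
  have hK : Convex ℝ K := by simpa using hg.convex_lt (g x₀)
  by_cases hKint : (interior K).Nonempty
  · obtain ⟨f, hf⟩ := geometric_hahn_banach_open_point hK.interior isOpen_interior
      fun hx₀K => lt_irrefl _ (interior_subset hx₀K : x₀ ∈ K)
    have hf0 : f ≠ 0 := by
      rintro rfl
      obtain ⟨y, hy⟩ := hKint
      simpa using hf y hy
    have hKf : K ⊆ {x | f x ≤ f x₀} := by
      refine subset_closure.trans ?_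
      rw [← hK.closure_interior_eq_closure_of_nonempty_interior hKint]
      exact closure_minimal (fun x hx => (hf x hx).le) (isClosed_le f.continuous continuous_const)
    refine ⟨{x | x ∈ Ici 0 ∧ f x₀ < f x}, fun x hx => hx.1,
      measurableSet_Ici.inter (measurableSet_lt measurable_const f.measurable),
      fun x hx => not_lt.1 fun hgx => (hKf hgx).not_gt hx.2, le_volume_orthant_halfspace hf0 hx₀⟩
  · have hK0 : volume K = 0 := by
      refine measure_mono_null (fun x hx => ?_) (hK.addHaar_frontier volume)
      rw [frontier, not_nonempty_iff_eq_empty.1 hKint, sdiff_empty]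
      exact subset_closure hx
    refine ⟨Ici 0 \ toMeasurable volume K, sdiff_subset,
      measurableSet_Ici.diff (measurableSet_toMeasurable _ _),
      fun x hx => not_lt.1 fun hgx => hx.2 (subset_toMeasurable _ _ hgx), ?_⟩
    rw [measure_sdiff_null (by rwa [measure_toMeasurable])]
    exact ofReal_le_volume_orthant x₀

theorem increasing_pointwise_bound_general (d : ℕ)
    (h : EReal → ℝ≥0∞) (hmono : Monotone h)
    (g : (Fin d → ℝ) → EReal) (hg : ERealConvex g)
    (C : ℝ≥0∞)
    (hint : ∫⁻ x in {x : Fin d → ℝ | ∀ i, 0 ≤ x i}, h (g x) ∂volume = C)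
    (x₀ : Fin d → ℝ) (hx₀ : ∀ i, 0 < x₀ i) :
    h (g x₀) ≤ C * (Nat.factorial d : ℝ≥0∞) /
      ((d : ℝ≥0∞) ^ d * ENNReal.ofReal (∏ i, x₀ i)) := by
  obtain ⟨R, hR, hRmeas, hgR, hvol⟩ :=
    exists_subset_orthant_forall_le_of_quasiconvexOn hg.quasiconvexOn hx₀
  have hmass : h (g x₀) * volume R ≤ C :=
    calc h (g x₀) * volume R = ∫⁻ _ in R, h (g x₀) := (setLIntegral_const R _).symm
      _ ≤ ∫⁻ x in R, h (g x) := setLIntegral_mono' hRmeas fun x hx => hmono (hgR x hx)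
      _ ≤ ∫⁻ x in Ici 0, h (g x) := lintegral_mono_set hR
      _ = C := hint
  have hprod : 0 < ∏ i, x₀ i := Finset.prod_pos fun i _ => hx₀ i
  rw [ENNReal.ofReal_div_of_pos (by positivity), ENNReal.ofReal_mul (by positivity),
    ENNReal.ofReal_pow (by positivity), ENNReal.ofReal_natCast, ENNReal.ofReal_natCast,
    ENNReal.div_le_iff_le_mul (by simp [Nat.factorial_ne_zero]) (by simp)] at hvol
  rw [ENNReal.le_div_iff_mul_le (by simp [hprod]) (.inl (by finiteness))]
  calc h (g x₀) * ((d : ℝ≥0∞) ^ d * ENNReal.ofReal (∏ i, x₀ i))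
      ≤ h (g x₀) * volume R * d ! := by rw [mul_assoc]; gcongr
    _ ≤ C * d ! := by gcongr

theorem increasing_pointwise_bound (d : ℕ)
    (h : EReal → ℝ≥0∞) (hmono : Monotone h) (hbot : h ⊥ = 0) (htop : h ⊤ = ⊤)
    (g : (Fin d → ℝ) → EReal) (hg : ERealConvex g) (hlsc : LowerSemicontinuous g)
    (hgbot : ∀ x, g x ≠ ⊥)
    (hdom : {x | g x ≠ ⊤} = {x : Fin d → ℝ | ∀ i, 0 ≤ x i})
    (C : ℝ≥0∞) (hC : C ≠ ⊤)
    (hint : ∫⁻ x in {x : Fin d → ℝ | ∀ i, 0 ≤ x i}, h (g x) ∂volume = C)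
    (x₀ : Fin d → ℝ) (hx₀ : ∀ i, 0 < x₀ i)
    (hy₀ : sInf {y : EReal | 0 < h y} < g x₀) :
    h (g x₀) ≤ C * (Nat.factorial d : ℝ≥0∞) /
      ((d : ℝ≥0∞) ^ d * ENNReal.ofReal (∏ i, x₀ i)) :=
  increasing_pointwise_bound_general d h hmono g hg C hint x₀ hx₀
end

section
/- Let h be a decreasing transformation and g a closed proper convex function on ℝ^d with bounded sublevel sets such that h∘g is a probability density; suppose furthermore that h(y) ≥ c·(y − y_∞)^{−β} near y_∞ for some β > d whenever y_∞ = inf{y : h(y) < +∞} > −∞. Then inf g > y_∞. -/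
/-!
The sublevel sets of `g` are compact, so `g` attains its minimum at some `x₀`, and `g x₀ ≠ ⊥`.
If `y∞ = inf {y | h y < ∞}` is finite and `g x₀ ≤ y∞`, convexity makes `{g ≤ y∞ + ε}` contain
the image of a sublevel set `{g ≤ b}` of positive volume under the homothety of ratio
`ε / (b - y∞)` centred at `x₀`. Its volume is therefore `≳ εᵈ` while `h ≳ ε^(-β)` on it, and
`β > d` makes `∫ h ∘ g` infinite. If `y∞ = ⊤`, then `h = ⊤` on a sublevel set of positive
volume, and the integral is infinite again.
-/

open MeasureTheory
open scoped ENNReal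

open Filter Topology

theorem LowerSemicontinuous.exists_forall_le_of_isCompact_sublevel {α β : Type*}
    [TopologicalSpace α] [LinearOrder β] {f : α → β} (hf : LowerSemicontinuous f) {b : β}
    (hK : IsCompact {x | f x ≤ b}) (hne : {x | f x ≤ b}.Nonempty) : ∃ x₀, ∀ x, f x₀ ≤ f x := by
  obtain ⟨x₀, hx₀b, hmin⟩ := hf.lowerSemicontinuousOn _ |>.exists_isMinOn hne hK
  refine ⟨x₀, fun x => ?_⟩
  by_cases hxb : f x ≤ b
  · exact hmin hxb
  · exact (hx₀b : f x₀ ≤ b).trans (not_le.1 hxb).le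

theorem exists_lt_measure_sublevel_pos {α : Type*} [MeasurableSpace α] {μ : Measure α}
    {h : EReal → ℝ≥0∞} {g : α → EReal} (htop : h ⊤ = 0) (hint : ∫⁻ x, h (g x) ∂μ ≠ 0) (t : ℝ) :
    ∃ b : ℝ, t < b ∧ 0 < μ {x | g x ≤ b} := by
  by_contra! hnull
  have hfinite_null : μ {x | g x ≠ ⊤} = 0 := by
    refine measure_mono_null (fun x hx => ?_) (measure_iUnion_null fun n : ℕ =>
      nonpos_iff_eq_zero.1 (hnull (t + n + 1) (by linarith [n.cast_nonneg (α := ℝ)])))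
    obtain ⟨r, hr⟩ := EReal.exists_between_coe_real (Ne.lt_top hx)
    obtain ⟨n, hn⟩ := exists_nat_ge (r - t)
    exact Set.mem_iUnion.2 ⟨n, hr.1.le.trans (EReal.coe_le_coe_iff.2 (by linarith))⟩
  refine hint ((lintegral_congr_ae (ae_iff.2 (measure_mono_null (fun x hx => ?_)
    hfinite_null))).trans lintegral_zero)
  exact fun hgx => hx (by simp [hgx, htop])

theorem mul_measure_sublevel_le_lintegral_comp {α : Type*} [MeasurableSpace α] (μ : Measure α)
    {h : EReal → ℝ≥0∞} {g : α → EReal} (hh : Antitone h) (hg : AEMeasurable g μ) (s : EReal) :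
    h s * μ {x | g x ≤ s} ≤ ∫⁻ x, h (g x) ∂μ :=
  calc h s * μ {x | g x ≤ s} ≤ h s * μ {x | h s ≤ h (g x)} :=
        mul_le_mul_right (measure_mono fun _ hx => hh hx) _
    _ ≤ ∫⁻ x, h (g x) ∂μ := mul_meas_ge_le_lintegral₀ (hh.measurable.comp_aemeasurable hg) _

theorem tendsto_mul_rpow_neg_mul_div_pow_nhdsGT_zero {β c L : ℝ} {d : ℕ} (hβ : d < β)
    (hc : 0 < c) (hL : 0 < L) :
    Tendsto (fun ε => c * ε ^ (-β) * (ε / L) ^ d) (𝓝[>] 0) atTop := by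
  refine ((tendsto_rpow_neg_nhdsGT_zero (sub_neg.2 hβ)).const_mul_atTop
    (div_pos hc (pow_pos hL d))).congr' ?_
  filter_upwards [self_mem_nhdsWithin] with ε (hε : 0 < ε)
  rw [Real.rpow_sub hε, Real.rpow_neg hε.le, Real.rpow_natCast, div_pow]
  field_simp

section Convex

variable {E : Type*} [NormedAddCommGroup E] [NormedSpace ℝ E] {g : E → EReal}

theorem ERealConvex.apply_homothety_le (hg : ERealConvex g) {x₀ y : E} {a b l : ℝ}
    (hx₀ : g x₀ ≤ a) (hy : g y ≤ b) (hl₀ : 0 ≤ l) (hl₁ : l ≤ 1) :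
    g (AffineMap.homothety x₀ l y) ≤ ↑(l * b + (1 - l) * a) :=
  calc g (AffineMap.homothety x₀ l y) = g (l • y + (1 - l) • x₀) := by
        rw [AffineMap.homothety_apply, vsub_eq_sub, vadd_eq_add]
        congr 1
        module
    _ ≤ l * g y + ↑(1 - l) * g x₀ := hg y x₀ l (1 - l) hl₀ (by linarith) (by ring)
    _ ≤ l * b + ↑(1 - l) * a := by gcongr
    _ = ↑(l * b + (1 - l) * a) := by norm_cast

variable [MeasurableSpace E] [BorelSpace E] [FiniteDimensional ℝ E] (μ : Measure E)
  [μ.IsAddHaarMeasure]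

theorem ERealConvex.measure_sublevel_ge (hg : ERealConvex g) {x₀ : E} {a b s : ℝ}
    (hx₀ : g x₀ ≤ a) (has : a ≤ s) (hsb : s ≤ b) (hab : a < b) :
    ENNReal.ofReal (((s - a) / (b - a)) ^ Module.finrank ℝ E) * μ {x | g x ≤ b} ≤
      μ {x | g x ≤ s} := by
  have hba : 0 < b - a := sub_pos.2 hab
  set l := (s - a) / (b - a) with hl
  have hl₀ : 0 ≤ l := div_nonneg (sub_nonneg.2 has) hba.le
  have hl₁ : l ≤ 1 := (div_le_one hba).2 (by linarith)
  have hlevel : l * b + (1 - l) * a = s := by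
    rw [hl]
    field_simp
    ring
  rw [← abs_of_nonneg (pow_nonneg hl₀ _), ← Measure.addHaar_image_homothety]
  refine measure_mono ?_
  rintro _ ⟨y, hy, rfl⟩
  exact hlevel ▸ hg.apply_homothety_le hx₀ hy hl₀ hl₁

theorem ERealConvex.lintegral_comp_eq_top {h : EReal → ℝ≥0∞} (hh : Antitone h)
    (hg : ERealConvex g) (hgm : AEMeasurable g μ) {x₀ : E} {t b β c δ : ℝ} (hx₀ : g x₀ ≤ t)
    (htb : t < b) (hV₀ : μ {x | g x ≤ b} ≠ 0) (hV : μ {x | g x ≤ b} ≠ ⊤)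
    (hβ : Module.finrank ℝ E < β) (hc : 0 < c) (hδ : 0 < δ)
    (hlow : ∀ y : ℝ, t < y → y < t + δ → ENNReal.ofReal (c * (y - t) ^ (-β)) ≤ h y) :
    ∫⁻ x, h (g x) ∂μ = ⊤ := by
  refine ENNReal.eq_top_of_forall_nnreal_le fun r => ?_
  have hblow := (tendsto_mul_rpow_neg_mul_div_pow_nhdsGT_zero hβ hc (sub_pos.2 htb)).atTop_mul_const
    (ENNReal.toReal_pos hV₀ hV)
  obtain ⟨ε, hbig, hε, hεmin⟩ := (hblow.eventually_gt_atTop r |>.and <|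
    Ioo_mem_nhdsGT (lt_min hδ (sub_pos.2 htb))).exists
  have hεδ : ε < δ := hεmin.trans_le (min_le_left _ _)
  have hεb : t + ε ≤ b := by linarith [min_le_right δ (b - t)]
  calc (r : ℝ≥0∞) ≤ ENNReal.ofReal (c * ε ^ (-β) * (ε / (b - t)) ^ Module.finrank ℝ E *
        (μ {x | g x ≤ b}).toReal) := by
        rw [← ENNReal.ofReal_coe_nnreal]
        exact ENNReal.ofReal_le_ofReal hbig.le
    _ = ENNReal.ofReal (c * ((t + ε) - t) ^ (-β)) *
          (ENNReal.ofReal ((((t + ε) - t) / (b - t)) ^ Module.finrank ℝ E) * μ {x | g x ≤ b}) := by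
        rw [add_sub_cancel_left, ENNReal.ofReal_mul (by positivity),
          ENNReal.ofReal_mul (by positivity), ENNReal.ofReal_toReal hV, mul_assoc]
    _ ≤ h ↑(t + ε) * μ {x | g x ≤ ↑(t + ε)} := by
        gcongr
        · exact hlow _ (by linarith) (by linarith)
        · exact hg.measure_sublevel_ge μ hx₀ (by linarith) hεb htb
    _ ≤ ∫⁻ x, h (g x) ∂μ := mul_measure_sublevel_le_lintegral_comp μ hh hgm _

end Convex

theorem inf_above_y_infty_general (d : ℕ)
    (h : EReal → ℝ≥0∞) (hmono : Antitone h) (htop : h ⊤ = 0)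
    (g : (Fin d → ℝ) → EReal) (hg : ERealConvex g) (hlsc : LowerSemicontinuous g)
    (hgbot : ∀ x, g x ≠ ⊥)
    (hlev : ∀ y : ℝ, Bornology.IsBounded {x | g x ≤ (y : EReal)})
    (hdens : ∫⁻ x, h (g x) ∂volume = 1)
    (htail : ∀ t : ℝ, sInf {y : EReal | h y < ⊤} = (t : EReal) →
      ∃ β c δ : ℝ, (d : ℝ) < β ∧ 0 < c ∧ 0 < δ ∧
        ∀ y : ℝ, t < y → y < t + δ →
          ENNReal.ofReal (c * (y - t) ^ (-β)) ≤ h (y : EReal)) :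
    sInf {y : EReal | h y < ⊤} < ⨅ x, g x := by
  have hgm : AEMeasurable g volume := hlsc.measurable.aemeasurable
  have hpos := exists_lt_measure_sublevel_pos htop (hdens ▸ one_ne_zero)
  obtain ⟨x₀, hx₀⟩ : ∃ x₀, ∀ x, g x₀ ≤ g x :=
    have ⟨b, _, hb⟩ := hpos 0
    hlsc.exists_forall_le_of_isCompact_sublevel
      (Metric.isCompact_of_isClosed_isBounded (hlsc.isClosed_preimage _) (hlev b))
      (nonempty_of_measure_ne_zero hb.ne')
  rw [le_antisymm (iInf_le _ x₀) (le_iInf hx₀)]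
  induction hS : sInf {y : EReal | h y < ⊤} using EReal.rec with
  | bot => exact (hgbot x₀).bot_lt
  | top =>
    obtain ⟨b, -, hb⟩ := hpos 0
    have hhb : h b = ⊤ := not_lt_top_iff.1 fun hlt =>
      (EReal.coe_lt_top b).not_ge (hS ▸ sInf_le hlt)
    have := mul_measure_sublevel_le_lintegral_comp volume hmono hgm b
    simp [hhb, hdens, ENNReal.top_mul hb.ne'] at this
  | coe t =>
    by_contra! hle
    obtain ⟨β, c, δ, hβ, hc, hδ, hlow⟩ := htail t hS
    obtain ⟨b, htb, hV₀⟩ := hpos t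
    refine ENNReal.one_ne_top (hdens ▸ hg.lintegral_comp_eq_top volume hmono hgm hle htb
      hV₀.ne' (hlev b).measure_lt_top.ne ?_ hc hδ hlow)
    rwa [Module.finrank_fin_fun]

theorem inf_above_y_infty (d : ℕ)
    (h : EReal → ℝ≥0∞) (hmono : Antitone h) (hbot : h ⊥ = ⊤) (htop : h ⊤ = 0)
    (g : (Fin d → ℝ) → EReal) (hg : ERealConvex g) (hlsc : LowerSemicontinuous g)
    (hgbot : ∀ x, g x ≠ ⊥) (hgproper : ∃ x, g x ≠ ⊤)
    (hlev : ∀ y : ℝ, Bornology.IsBounded {x | g x ≤ (y : EReal)})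
    (hdens : ∫⁻ x, h (g x) ∂volume = 1)
    (htail : ∀ t : ℝ, sInf {y : EReal | h y < ⊤} = (t : EReal) →
      ∃ β c δ : ℝ, (d : ℝ) < β ∧ 0 < c ∧ 0 < δ ∧
        ∀ y : ℝ, t < y → y < t + δ →
          ENNReal.ofReal (c * (y - t) ^ (-β)) ≤ h (y : EReal)) :
    sInf {y : EReal | h y < ⊤} < ⨅ x, g x :=
  inf_above_y_infty_general d h hmono htop g hg hlsc hgbot hlev hdens htail
end

section
/- Let A be a closed convex set in ℝ^d with nonempty interior, and let {B_n} be a sequence of convex sets with A ⊆ B_n and μ(B_n \ A) → 0. Then for every x ∉ A, x belongs to only finitely many of the closures of the B_n; i.e., limsup cl(B_n) = cl(A). -/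
open MeasureTheory Filter Set Topology

/-! If `x ∉ A`, the convex hull of `{x} ∪ A` has nonempty interior and, being convex, `x` lies in
the closure of that interior; so it contains a nonempty open set `U` avoiding `A`. Whenever
`x ∈ closure (B n)`, the convex set `closure (B n)` contains `U`, and as the frontier of a convex
set is null, `μ U ≤ μ (closure (B n) \ A) = μ (B n \ A)`. Since `μ U > 0` and `μ (B n \ A) → 0`,
this happens only finitely often. -/

theorem exists_isOpen_subset_convexHull_insert_diff {E : Type*} [AddCommGroup E] [Module ℝ E]
    [TopologicalSpace E] [IsTopologicalAddGroup E] [ContinuousSMul ℝ E]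
    {A : Set E} (hAi : (interior A).Nonempty) {x : E} (hx : x ∉ closure A) :
    ∃ U, IsOpen U ∧ U.Nonempty ∧ U ⊆ convexHull ℝ (insert x A) \ A := by
  set C := convexHull ℝ (insert x A)
  have hCi : (interior C).Nonempty :=
    hAi.mono (interior_mono ((subset_insert x A).trans (subset_convexHull ℝ _)))
  have hxC : x ∈ closure (interior C) := by
    rw [(convex_convexHull ℝ _).closure_interior_eq_closure_of_nonempty_interior hCi]
    exact subset_closure (subset_convexHull ℝ _ (mem_insert x A))
  obtain ⟨z, hzA, hzC⟩ :=
    mem_closure_iff.1 hxC _ isClosed_closure.isOpen_compl hx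
  refine ⟨(closure A)ᶜ ∩ interior C, isClosed_closure.isOpen_compl.inter isOpen_interior,
    ⟨z, hzA, hzC⟩, fun w hw => ⟨interior_subset hw.2, fun hwA => hw.1 (subset_closure hwA)⟩⟩

theorem Convex.addHaar_closure_diff {E : Type*} [NormedAddCommGroup E] [NormedSpace ℝ E]
    [MeasurableSpace E] [BorelSpace E] [FiniteDimensional ℝ E] (μ : Measure E)
    [μ.IsAddHaarMeasure] {B : Set E} (hB : Convex ℝ B) (A : Set E) :
    μ (closure B \ A) = μ (B \ A) :=
  measure_congr ((closure_ae_eq_of_null_frontier (hB.addHaar_frontier μ)).diff EventuallyEq.rfl)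

theorem eventually_notMem_closure_of_tendsto_measure_diff {E ι : Type*} [NormedAddCommGroup E]
    [NormedSpace ℝ E] [MeasurableSpace E] [BorelSpace E] [FiniteDimensional ℝ E]
    (μ : Measure E) [μ.IsAddHaarMeasure] {l : Filter ι}
    {A : Set E} (hAi : (interior A).Nonempty) {B : ι → Set E} (hB : ∀ n, Convex ℝ (B n))
    (hAB : ∀ n, A ⊆ B n) (hμ : Tendsto (fun n => μ (B n \ A)) l (𝓝 0))
    {x : E} (hx : x ∉ closure A) : ∀ᶠ n in l, x ∉ closure (B n) := by
  obtain ⟨U, hUo, hUne, hUsub⟩ := exists_isOpen_subset_convexHull_insert_diff hAi hx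
  filter_upwards [hμ.eventually (gt_mem_nhds (hUo.measure_pos μ hUne))] with n hn hxn
  refine hn.not_ge ?_
  have hhull : convexHull ℝ (insert x A) ⊆ closure (B n) :=
    convexHull_min (insert_subset hxn ((hAB n).trans subset_closure)) (hB n).closure
  calc μ U ≤ μ (closure (B n) \ A) := measure_mono (hUsub.trans (sdiff_subset_sdiff_left hhull))
    _ = μ (B n \ A) := (hB n).addHaar_closure_diff μ A

theorem iInter_iUnion_le_eq_of_finite_setOf_mem {α : Type*} {A : Set α} {S : ℕ → Set α}
    (hAS : ∀ n, A ⊆ S n) (hfin : ∀ x ∉ A, {n | x ∈ S n}.Finite) :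
    ⋂ N, ⋃ n, ⋃ (_ : N ≤ n), S n = A := by
  ext x
  have hmem : x ∈ ⋂ N, ⋃ n, ⋃ (_ : N ≤ n), S n ↔ ∃ᶠ n in atTop, x ∈ S n := by
    simp only [mem_iInter, mem_iUnion, frequently_atTop, exists_prop]
  rw [hmem, Nat.frequently_atTop_iff_infinite]
  refine ⟨fun h => by_contra fun hx => h (hfin x hx), fun hx => ?_⟩
  simpa only [hAS _ hx, ofPred_true] using infinite_univ

theorem limsup_closure_of_convex_approx_from_above_general (d : ℕ)
    (A : Set (Fin d → ℝ)) (hAc : IsClosed A)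
    (hAi : (interior A).Nonempty)
    (B : ℕ → Set (Fin d → ℝ)) (hB : ∀ n, Convex ℝ (B n)) (hAB : ∀ n, A ⊆ B n)
    (hvol : Tendsto (fun n => volume (B n \ A)) atTop (nhds 0)) :
    (∀ x ∉ A, {n | x ∈ closure (B n)}.Finite) ∧
      (⋂ N, ⋃ n, ⋃ (_ : N ≤ n), closure (B n)) = closure A := by
  have hfin : ∀ x ∉ A, {n | x ∈ closure (B n)}.Finite := fun x hx => by
    rw [← hAc.closure_eq] at hx
    simpa only [← Nat.cofinite_eq_atTop, eventually_cofinite, not_not] using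
      eventually_notMem_closure_of_tendsto_measure_diff volume hAi hB hAB hvol hx
  refine ⟨hfin, ?_⟩
  rw [hAc.closure_eq]
  exact iInter_iUnion_le_eq_of_finite_setOf_mem (fun n => (hAB n).trans subset_closure) hfin

theorem limsup_closure_of_convex_approx_from_above (d : ℕ)
    (A : Set (Fin d → ℝ)) (hA : Convex ℝ A) (hAc : IsClosed A)
    (hAi : (interior A).Nonempty)
    (B : ℕ → Set (Fin d → ℝ)) (hB : ∀ n, Convex ℝ (B n)) (hAB : ∀ n, A ⊆ B n)
    (hvol : Tendsto (fun n => volume (B n \ A)) atTop (nhds 0)) :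
    (∀ x ∉ A, {n | x ∈ closure (B n)}.Finite) ∧
      (⋂ N, ⋃ n, ⋃ (_ : N ≤ n), closure (B n)) = closure A :=
  limsup_closure_of_convex_approx_from_above_general d A hAc hAi B hB hAB hvol
end

section
/- Let A be a closed convex set in ℝ^d with nonempty interior, and let {C_n} be a sequence of convex sets with C_n ⊆ A and μ(A \ C_n) → 0. Then every point of the interior of A belongs to all but finitely many C_n; i.e., liminf ri(C_n) ⊇ ri(A). -/
/-!
If a convex set `C` misses the point `x`, then of any two points of a ball around `x` that are
symmetric about `x` at most one lies in `C`, since otherwise their midpoint `x` would. Hence at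
least half of the ball lies outside `C`, so once `μ (A \ Cₙ)` is below half the measure of a ball
around `x` inside `A`, the point `x` lies in `Cₙ`. Applying this to the vertices of a small
simplex around a point of `interior A` puts that point in `interior Cₙ` for all large `n`; and
since `A` has nonempty interior, its intrinsic interior is its interior.
-/

open MeasureTheory Filter Metric Set Topology

theorem intrinsicInterior_subset_interior_of_affineSpan_eq_top {𝕜 V P : Type*} [Ring 𝕜]
    [AddCommGroup V] [Module 𝕜 V] [TopologicalSpace P] [AddTorsor V P] {s : Set P}
    (hs : affineSpan 𝕜 s = ⊤) : intrinsicInterior 𝕜 s ⊆ interior s := by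
  rintro _ ⟨y, hy, rfl⟩
  have hopen : IsOpen (affineSpan 𝕜 s : Set P) := by rw [hs]; exact isOpen_univ
  exact interior_mono (image_preimage_subset _ _)
    (hopen.isOpenEmbedding_subtypeVal.isOpenMap.image_interior_subset _ (mem_image_of_mem _ hy))

section Reflection

variable {E : Type*} [NormedAddCommGroup E] [NormedSpace ℝ E] [MeasurableSpace E]
  [MeasurableAdd E] [MeasurableNeg E]
  (μ : Measure E) [μ.IsAddLeftInvariant] [μ.IsNegInvariant]

theorem measure_ball_le_two_mul_measure_ball_diff_of_convex {C : Set E} (hC : Convex ℝ C)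
    {x : E} (hx : x ∉ C) (r : ℝ) : μ (ball x r) ≤ 2 * μ (ball x r \ C) := by
  set σ : E → E := fun y => (2 : ℝ) • x - y
  have hcover : ball x r ⊆ (ball x r \ C) ∪ σ ⁻¹' (ball x r \ C) := by
    intro y hy
    by_cases hyC : y ∈ C
    · refine Or.inr ⟨?_, fun hσy => hx ?_⟩
      · rw [mem_ball, dist_eq_norm] at hy ⊢
        convert hy using 1
        rw [← norm_neg]; congr 1; module
      · convert hC hyC hσy (by norm_num : (0 : ℝ) ≤ 1 / 2) (by norm_num : (0 : ℝ) ≤ 1 / 2)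
          (by norm_num) using 1
        module
    · exact Or.inl ⟨hy, hyC⟩
  have hσ : ∀ s, μ (σ ⁻¹' s) = μ s := fun s => by
    have : σ = ((2 : ℝ) • x + ·) ∘ Neg.neg := by ext y; simp [σ, sub_eq_add_neg]
    rw [this, preimage_comp, Measure.measure_preimage_neg, measure_preimage_add]
  calc μ (ball x r) ≤ μ (ball x r \ C) + μ (σ ⁻¹' (ball x r \ C)) :=
        (measure_mono hcover).trans (measure_union_le _ _)
    _ = 2 * μ (ball x r \ C) := by rw [hσ, two_mul]

end Reflection

section Approximation

variable {E : Type*} [NormedAddCommGroup E] [NormedSpace ℝ E] [FiniteDimensional ℝ E]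
  {ι : Type*} {l : Filter ι} {C : ι → Set E}

theorem eventually_mem_of_tendsto_measure_diff [MeasurableSpace E] [BorelSpace E]
    (μ : Measure E) [μ.IsAddHaarMeasure] {A : Set E} (hC : ∀ i, Convex ℝ (C i))
    (hvol : Tendsto (fun i => μ (A \ C i)) l (𝓝 0)) {x : E} (hx : x ∈ interior A) :
    ∀ᶠ i in l, x ∈ C i := by
  obtain ⟨ε, hε, hball⟩ := Metric.mem_nhds_iff.1 (mem_interior_iff_mem_nhds.1 hx)
  have hvol₂ : Tendsto (fun i => 2 * μ (A \ C i)) l (𝓝 0) := by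
    simpa using ENNReal.Tendsto.const_mul hvol (Or.inr ENNReal.ofNat_ne_top)
  filter_upwards [hvol₂.eventually_lt_const (measure_ball_pos μ x hε)] with i hi
  by_contra hxC
  have hle : μ (ball x ε) ≤ 2 * μ (A \ C i) :=
    (measure_ball_le_two_mul_measure_ball_diff_of_convex μ (hC i) hxC ε).trans (by gcongr)
  exact hle.not_gt hi

theorem eventually_mem_interior_of_forall_mem_nhds_eventually_mem (hC : ∀ i, Convex ℝ (C i))
    {x : E} {U : Set E} (hU : U ∈ 𝓝 x) (h : ∀ y ∈ U, ∀ᶠ i in l, y ∈ C i) :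
    ∀ᶠ i in l, x ∈ interior (C i) := by
  obtain ⟨b, hxb, hbU⟩ := exists_mem_interior_convexHull_affineBasis hU
  have hvert : ∀ᶠ i in l, ∀ j, b j ∈ C i :=
    eventually_all.2 fun j => h _ (hbU (subset_convexHull ℝ _ (mem_range_self j)))
  filter_upwards [hvert] with i hi
  exact interior_mono (convexHull_min (range_subset_iff.2 hi) (hC i)) hxb

end Approximation

theorem liminf_interior_of_convex_approx_from_below_general (d : ℕ)
    (A : Set (Fin d → ℝ))
    (hAi : (interior A).Nonempty)
    (C : ℕ → Set (Fin d → ℝ)) (hC : ∀ n, Convex ℝ (C n))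
    (hvol : Tendsto (fun n => volume (A \ C n)) atTop (nhds 0)) :
    (∀ x ∈ interior A, {n | x ∉ C n}.Finite) ∧
      intrinsicInterior ℝ A ⊆ ⋃ N, ⋂ n, ⋂ (_ : N ≤ n), intrinsicInterior ℝ (C n) := by
  have hmem : ∀ x ∈ interior A, ∀ᶠ n in atTop, x ∈ C n := fun x hx =>
    eventually_mem_of_tendsto_measure_diff volume hC hvol hx
  refine ⟨fun x hx => ?_, fun x hx => ?_⟩
  · rw [← Nat.cofinite_eq_atTop] at hmem
    exact hmem x hx
  · have hxA : x ∈ interior A := intrinsicInterior_subset_interior_of_affineSpan_eq_top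
      (affineSpan_eq_top_of_nonempty_interior
        (hAi.mono (interior_mono (subset_convexHull ℝ A)))) hx
    obtain ⟨N, hN⟩ := eventually_atTop.1 <|
      eventually_mem_interior_of_forall_mem_nhds_eventually_mem hC
        (isOpen_interior.mem_nhds hxA) hmem
    exact mem_iUnion.2 ⟨N, mem_iInter₂.2 fun n hn => interior_subset_intrinsicInterior (hN n hn)⟩

theorem liminf_interior_of_convex_approx_from_below (d : ℕ)
    (A : Set (Fin d → ℝ)) (hA : Convex ℝ A) (hAc : IsClosed A)
    (hAi : (interior A).Nonempty)
    (C : ℕ → Set (Fin d → ℝ)) (hC : ∀ n, Convex ℝ (C n)) (hCA : ∀ n, C n ⊆ A)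
    (hvol : Tendsto (fun n => volume (A \ C n)) atTop (nhds 0)) :
    (∀ x ∈ interior A, {n | x ∉ C n}.Finite) ∧
      intrinsicInterior ℝ A ⊆ ⋃ N, ⋂ n, ⋂ (_ : N ≤ n), intrinsicInterior ℝ (C n) :=
  liminf_interior_of_convex_approx_from_below_general d A hAi C hC hvol
end
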